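/- arXiv:1801.06585 — 2 statements merged into one kernel-verified Lean document; each statement's English description precedes it below -/
import Mathlib

section
/- Every zigzag in a triangulation is edge-simple (all its edges are mutually distinct) if and only if M_F = D_F⁻¹ for every face F. -/
open Finset

/-- A (combinatorial) triangulation of a connected closed surface:
a finite set of triangular faces such that every edge lies in exactly two
faces, two distinct faces meet in at most an edge, and the dual graph is
connected. -/
structure Triangulation (V : Type) [Fintype V] [DecidableEq V] where
  faces : Finset (Finset V)
  faces_nonempty : faces.Nonempty
  card_eq : ∀ F ∈ faces, F.card = 3
  edge_two_faces : ∀ e : Finset V, e.card = 2 → (∃ F ∈ faces, e ⊆ F) →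
      (faces.filter fun F => e ⊆ F).card = 2
  inter_le : ∀ F ∈ faces, ∀ F' ∈ faces, F ≠ F' → (F ∩ F').card ≤ 2
  connected : ∀ F ∈ faces, ∀ F' ∈ faces,
      Relation.ReflTransGen
        (fun A B => A ∈ faces ∧ B ∈ faces ∧ (A ∩ B).card = 2) F F'

namespace Triangulation

variable {V : Type} [Fintype V] [DecidableEq V] (T : Triangulation V)

/-- `e` is an edge of the triangulation. -/
def IsEdge (e : Finset V) : Prop := e.card = 2 ∧ ∃ F ∈ T.faces, e ⊆ F

/-- A zigzag sequence: consecutive edges are adjacent (distinct, sharing a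
vertex and a face), the faces containing consecutive pairs are distinct, and
edges two apart are disjoint. -/
def IsZigzagSeq (f : ℕ → Finset V) : Prop :=
  (∀ i, T.IsEdge (f i)) ∧
  (∀ i, f i ≠ f (i + 1) ∧ (f i ∩ f (i + 1)).Nonempty ∧
      ∃ F ∈ T.faces, f i ⊆ F ∧ f (i + 1) ⊆ F) ∧
  (∀ i, ∀ F ∈ T.faces, ∀ F' ∈ T.faces,
      f i ⊆ F → f (i + 1) ⊆ F → f (i + 1) ⊆ F' → f (i + 2) ⊆ F' → F ≠ F') ∧
  (∀ i, f i ∩ f (i + 2) = ∅)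

/-- A zigzag: a zigzag sequence together with its (minimal) period. -/
structure Zigzag where
  seq : ℕ → Finset V
  period : ℕ
  period_pos : 0 < period
  periodic : ∀ i, seq (i + period) = seq i
  period_min : ∀ m, 0 < m → (∀ i, seq (i + m) = seq i) → period ≤ m
  isZigzag : T.IsZigzagSeq seq

variable {T}

/-- Two zigzags are the same cyclic sequence (up to a shift). -/
def Zigzag.Equiv (Z Z' : T.Zigzag) : Prop := ∃ k, ∀ i, Z'.seq i = Z.seq (i + k)

/-- `Z'` is the reversal of `Z` (up to a shift). -/
def Zigzag.IsReverseOf (Z' Z : T.Zigzag) : Prop :=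
  ∃ k, ∀ i, Z'.seq i = Z.seq (k + Z.period - i % Z.period)

/-- The zigzag `Z` contains an edge of the face `F`. -/
def Zigzag.Meets (Z : T.Zigzag) (F : Finset V) : Prop := ∃ i, Z.seq i ⊆ F

/-- `F` is the `i`-th face of the face shadow of `Z`, i.e. the face containing
the `i`-th and `(i+1)`-st edges of `Z`. -/
def Zigzag.ShadowAt (Z : T.Zigzag) (i : ℕ) (F : Finset V) : Prop :=
  F ∈ T.faces ∧ Z.seq i ⊆ F ∧ Z.seq (i + 1) ⊆ F

/-- At position `i`, the zigzag `Z` traverses the oriented edge from `x`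
to `y` (the head `y` is the vertex shared with the next edge). -/
def Zigzag.Passes (Z : T.Zigzag) (i : ℕ) (x y : V) : Prop :=
  Z.seq i = {x, y} ∧ x ≠ y ∧ y ∈ Z.seq (i + 1)

variable (T)

/-- The triangulation is locally z-knotted in the face `F`:
`𝒵(F) = {Z, Z⁻¹}`. -/
def LocallyZKnotted (F : Finset V) : Prop :=
  (∃ Z : T.Zigzag, Z.Meets F) ∧
  ∀ Z Z' : T.Zigzag, Z.Meets F → Z'.Meets F → Z.Equiv Z' ∨ Z'.IsReverseOf Z

/-- The triangulation is z-knotted: it has exactly one zigzag up to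
reversal. -/
def ZKnotted : Prop :=
  Nonempty T.Zigzag ∧ ∀ Z Z' : T.Zigzag, Z.Equiv Z' ∨ Z'.IsReverseOf Z

/-- The z-monodromy relation of the face `F`: `M_F` sends the oriented edge
`(x,y)` of `F` to the oriented edge `(u,v)` of `F`.  Here `(u,v)` is the first
oriented edge of `F` occurring in the zigzag through `D_F⁻¹(x,y), (x,y)`
after `(x,y)`. -/
def MonodromyRel (F : Finset V) (x y u v : V) : Prop :=
  x ∈ F ∧ y ∈ F ∧
  ∃ Z : T.Zigzag, ∃ i j : ℕ,
    (∃ z, z ∈ F ∧ z ≠ x ∧ z ≠ y ∧ Z.Passes i z x) ∧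
    Z.Passes (i + 1) x y ∧
    i + 1 < j ∧ Z.Passes j u v ∧ u ∈ F ∧ v ∈ F ∧
    (∀ k, i + 1 < k → k < j → ∀ a b, a ∈ F → b ∈ F → ¬ Z.Passes k a b)

/-- The z-monodromy of `F` is the identity (type (M1)). -/
def MFIsId (F : Finset V) : Prop :=
  ∀ x y, x ∈ F → y ∈ F → x ≠ y → T.MonodromyRel F x y x y

/-- The z-monodromy of `F` is `D_F` (type (M2)). -/
def MFIsD (F : Finset V) : Prop :=
  ∀ x y z : V, ({x, y, z} : Finset V) = F → x ≠ y → y ≠ z → x ≠ z →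
    T.MonodromyRel F x y y z

/-- The z-monodromy of `F` is `D_F⁻¹` (type (M5)). -/
def MFIsDInv (F : Finset V) : Prop :=
  ∀ x y z : V, ({x, y, z} : Finset V) = F → x ≠ y → y ≠ z → x ≠ z →
    T.MonodromyRel F x y z x

/-- The z-monodromy of `F` is of type (M3):
`M_F = (-e₁,e₂,e₃)(-e₃,-e₂,e₁)` for a cycle `(e₁,e₂,e₃)` of `D_F`. -/
def MFIsM3 (F : Finset V) : Prop :=
  ∃ x y z : V, ({x, y, z} : Finset V) = F ∧ x ≠ y ∧ y ≠ z ∧ x ≠ z ∧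
    T.MonodromyRel F y x y z ∧ T.MonodromyRel F y z z x ∧
    T.MonodromyRel F z x y x ∧ T.MonodromyRel F x z z y ∧
    T.MonodromyRel F z y x y ∧ T.MonodromyRel F x y x z

/-- The z-monodromy of `F` is of type (M4):
`M_F = (e₁,-e₂)(e₂,-e₁)` with `e₃, -e₃` fixed, for a cycle `(e₁,e₂,e₃)`
of `D_F`. -/
def MFIsM4 (F : Finset V) : Prop :=
  ∃ x y z : V, ({x, y, z} : Finset V) = F ∧ x ≠ y ∧ y ≠ z ∧ x ≠ z ∧
    T.MonodromyRel F x y z y ∧ T.MonodromyRel F z y x y ∧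
    T.MonodromyRel F y z y x ∧ T.MonodromyRel F y x y z ∧
    T.MonodromyRel F z x z x ∧ T.MonodromyRel F x z x z

/-- The dual graph: vertices are faces, adjacent iff they share an edge. -/
def dualGraph : SimpleGraph {F : Finset V // F ∈ T.faces} where
  Adj A B := A ≠ B ∧ ((A : Finset V) ∩ (B : Finset V)).card = 2
  symm := by
    constructor
    intro A B h
    exact ⟨h.1.symm, by rw [Finset.inter_comm]; exact h.2⟩
  loopless := by constructor; intro A h; exact h.1 rfl

end Triangulation

/-!
A zigzag is determined by two consecutive edges `a, b`: the next edge is the face across `b` from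
`a ∪ b`, minus `a`. The rule is symmetric, so the zigzag step is injective on the finite set of
flags, and every flag lies on a closed zigzag.

If `M_F = D_F⁻¹`, a zigzag that has just traversed `(p, q), (q, r)` in `F` next meets `F` at
`(p, q)`. The edge before it is not in `F`, so the face there is again `F` and the following edge
is again `{q, r}`: a full period has elapsed, and no edge of `F` recurred in between.

Conversely, in an edge-simple zigzag through `(z, x), (x, y)`, an edge of `F` met strictly inside
the period must be `{y, z}`. One of its neighbours also lies in `F`, so it sits at position `1` or
at the period, where the zigzag is in `F` already; then two consecutive faces of the zigzag
coincide.
-/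

namespace Finset

variable {α : Type*} [DecidableEq α]

lemma eq_pair_of_subset_triple {s : Finset α} {x y z : α} (hs : s ⊆ {x, y, z}) (h2 : #s = 2) :
    s = {x, y} ∨ s = {y, z} ∨ s = {x, z} := by
  obtain ⟨a, b, hab, rfl⟩ := card_eq_two.mp h2
  have ha : a ∈ ({x, y, z} : Finset α) := hs (by simp)
  have hb : b ∈ ({x, y, z} : Finset α) := hs (by simp)
  simp only [mem_insert, mem_singleton] at ha hb
  rcases ha with rfl | rfl | rfl <;> rcases hb with rfl | rfl | rfl <;> simp_all [pair_comm]

lemma exists_eq_pair_of_mem {s : Finset α} (h2 : #s = 2) {b : α} (hb : b ∈ s) :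
    ∃ a, a ≠ b ∧ s = {a, b} := by
  obtain ⟨x, y, hxy, rfl⟩ := card_eq_two.mp h2
  rcases mem_insert.mp hb with rfl | hb
  · exact ⟨y, hxy.symm, pair_comm b y⟩
  · obtain rfl := mem_singleton.mp hb
    exact ⟨x, hxy, rfl⟩

end Finset

namespace Triangulation

variable {V : Type} [Fintype V] [DecidableEq V] {T : Triangulation V}

lemma eq_or_eq_of_edge_subset {e A B C : Finset V} (he : #e = 2) (hA : A ∈ T.faces)
    (heA : e ⊆ A) (hB : B ∈ T.faces) (heB : e ⊆ B) (hAB : A ≠ B) (hC : C ∈ T.faces)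
    (heC : e ⊆ C) : C = A ∨ C = B := by
  by_contra! h
  have hsub : ({A, B, C} : Finset (Finset V)) ⊆ T.faces.filter (e ⊆ ·) := by
    simp [insert_subset_iff, hA, hB, hC, heA, heB, heC]
  have h3 : #({A, B, C} : Finset (Finset V)) = 3 :=
    card_eq_three.mpr ⟨A, B, C, hAB, h.1.symm, h.2.symm, rfl⟩
  have := card_le_card hsub
  rw [T.edge_two_faces e he ⟨A, hA, heA⟩] at this
  omega

lemma exists_face_ne {e A : Finset V} (he : #e = 2) (hA : A ∈ T.faces) (heA : e ⊆ A) :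
    ∃ B ∈ T.faces, e ⊆ B ∧ B ≠ A := by
  obtain ⟨B, hB, hBA⟩ :=
    exists_mem_ne (by rw [T.edge_two_faces e he ⟨A, hA, heA⟩]; omega) A
  exact ⟨B, (mem_filter.mp hB).1, (mem_filter.mp hB).2, hBA⟩

lemma inter_eq_of_edge_subset {e A B : Finset V} (he : #e = 2) (hA : A ∈ T.faces)
    (hB : B ∈ T.faces) (hAB : A ≠ B) (heA : e ⊆ A) (heB : e ⊆ B) : A ∩ B = e :=
  (eq_of_subset_of_card_le (subset_inter heA heB) (he ▸ T.inter_le A hA B hB hAB)).symm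

variable (T) in
structure IsFlag (a b : Finset V) : Prop where
  card_left : #a = 2
  card_right : #b = 2
  ne : a ≠ b
  union_mem : a ∪ b ∈ T.faces

variable {a b c c' a' F : Finset V}

lemma IsFlag.symm (h : T.IsFlag a b) : T.IsFlag b a :=
  ⟨h.card_right, h.card_left, h.ne.symm, union_comm a b ▸ h.union_mem⟩

lemma IsFlag.card_inter (h : T.IsFlag a b) : #(a ∩ b) = 1 := by
  have := card_union_add_card_inter a b
  rw [T.card_eq _ h.union_mem, h.card_left, h.card_right] at this
  omega

lemma IsFlag.inter_nonempty (h : T.IsFlag a b) : (a ∩ b).Nonempty :=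
  card_pos.mp (by rw [h.card_inter]; exact one_pos)

lemma IsFlag.eq_union (h : T.IsFlag a b) (hF : F ∈ T.faces) (ha : a ⊆ F) (hb : b ⊆ F) :
    F = a ∪ b :=
  (eq_of_subset_of_card_le (union_subset ha hb)
    (by rw [T.card_eq _ hF, T.card_eq _ h.union_mem])).symm

lemma isFlag_of_subset (hF : F ∈ T.faces) (ha : a ⊆ F) (hb : b ⊆ F) (ha2 : #a = 2)
    (hb2 : #b = 2) (hab : a ≠ b) : T.IsFlag a b := by
  have hinter : #(a ∩ b) ≤ 1 := by
    by_contra! h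
    exact hab ((eq_of_subset_of_card_le inter_subset_left (by omega)).symm.trans
      (eq_of_subset_of_card_le inter_subset_right (by omega)))
  have hunion : a ∪ b = F := eq_of_subset_of_card_le (union_subset ha hb) (by
    have := card_union_add_card_inter a b
    rw [T.card_eq F hF]
    omega)
  exact ⟨ha2, hb2, hab, hunion ▸ hF⟩

variable (T) in
structure IsZigzagTriple (a b c : Finset V) : Prop where
  left : T.IsFlag a b
  right : T.IsFlag b c
  union_ne : a ∪ b ≠ b ∪ c
  disjoint : Disjoint a c

lemma IsZigzagTriple.symm (h : T.IsZigzagTriple a b c) : T.IsZigzagTriple c b a :=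
  ⟨h.right.symm, h.left.symm,
    fun h' => h.union_ne ((union_comm a b).trans (h'.symm.trans (union_comm c b))),
    h.disjoint.symm⟩

lemma IsZigzagTriple.right_unique (h : T.IsZigzagTriple a b c) (h' : T.IsZigzagTriple a b c') :
    c = c' := by
  obtain ⟨hab, hbc, hne, hac⟩ := h
  obtain ⟨-, hbc', hne', hac'⟩ := h'
  have hB : b ∪ c' = b ∪ c :=
    (eq_or_eq_of_edge_subset hab.card_right hab.union_mem subset_union_right hbc.union_mem
      subset_union_left hne hbc'.union_mem subset_union_left).resolve_left hne'.symm
  obtain ⟨s, hs⟩ := hab.inter_nonempty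
  have hsa : s ∈ a := (mem_inter.mp hs).1
  have hcard : #((b ∪ c).erase s) = 2 := by
    rw [card_erase_of_mem (mem_union_left _ (mem_inter.mp hs).2), T.card_eq _ hbc.union_mem]
  have heq_erase : ∀ d, Disjoint a d → d ⊆ b ∪ c → #d = 2 → d = (b ∪ c).erase s :=
    fun d had hd hd2 => eq_of_subset_of_card_le
      (fun x hx => mem_erase.mpr ⟨fun hxs => disjoint_left.mp had (hxs ▸ hsa) hx, hd hx⟩)
      (by rw [hcard, hd2])
  rw [heq_erase c hac subset_union_right hbc.card_right,
    heq_erase c' hac' (hB ▸ subset_union_right) hbc'.card_right]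

lemma IsZigzagTriple.left_unique (h : T.IsZigzagTriple a b c) (h' : T.IsZigzagTriple a' b c) :
    a = a' :=
  h.symm.right_unique h'.symm

lemma IsFlag.exists_isZigzagTriple (h : T.IsFlag a b) : ∃ c, T.IsZigzagTriple a b c := by
  obtain ⟨B, hB, hbB, hBA⟩ := exists_face_ne h.card_right h.union_mem subset_union_right
  have hBA' : B ∩ (a ∪ b) = b :=
    inter_eq_of_edge_subset h.card_right hB h.union_mem hBA hbB subset_union_right
  have hBa : B ∩ a = a ∩ b :=
    calc B ∩ a = B ∩ (a ∪ b) ∩ a := by rw [inter_assoc, union_inter_cancel_left]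
      _ = a ∩ b := by rw [hBA', inter_comm]
  have hunion : b ∪ B \ a = B := by
    refine Subset.antisymm (union_subset hbB sdiff_subset) ?_
    calc B = B \ a ∪ a ∩ b := by rw [← hBa, sdiff_union_inter]
      _ ⊆ b ∪ B \ a :=
        union_subset subset_union_right (inter_subset_right.trans subset_union_left)
  have hcard : #(B \ a) = 2 := by
    have := card_sdiff_add_card_inter B a
    rw [hBa, h.card_inter, T.card_eq _ hB] at this
    omega
  have hne : b ≠ B \ a := by
    obtain ⟨s, hs⟩ := h.inter_nonempty
    intro hb
    exact (mem_sdiff.mp (hb ▸ (mem_inter.mp hs).2)).2 (mem_inter.mp hs).1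
  refine ⟨B \ a, h, ⟨h.card_right, hcard, hne, ?_⟩, ?_, disjoint_sdiff⟩ <;> rw [hunion]
  exacts [hB, hBA.symm]

lemma isZigzagSeq_iff {f : ℕ → Finset V} :
    T.IsZigzagSeq f ↔ ∀ i, T.IsZigzagTriple (f i) (f (i + 1)) (f (i + 2)) := by
  constructor
  · rintro ⟨hedge, hadj, hface, hdisj⟩
    have hflag : ∀ i, T.IsFlag (f i) (f (i + 1)) := fun i => by
      obtain ⟨hne, -, F, hF, hi, hi1⟩ := hadj i
      exact isFlag_of_subset hF hi hi1 (hedge i).1 (hedge (i + 1)).1 hne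
    exact fun i => ⟨hflag i, hflag (i + 1),
      hface i _ (hflag i).union_mem _ (hflag (i + 1)).union_mem
        subset_union_left subset_union_right subset_union_left subset_union_right,
      disjoint_iff_inter_eq_empty.mpr (hdisj i)⟩
  · intro h
    refine ⟨fun i => ⟨(h i).left.card_left, _, (h i).left.union_mem, subset_union_left⟩,
      fun i => ⟨(h i).left.ne, (h i).left.inter_nonempty, _, (h i).left.union_mem,
        subset_union_left, subset_union_right⟩,
      fun i F hF F' hF' h1 h2 h3 h4 => ?_, fun i => disjoint_iff_inter_eq_empty.mp (h i).disjoint⟩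
    rw [(h i).left.eq_union hF h1 h2, (h i).right.eq_union hF' h3 h4]
    exact (h i).union_ne

lemma IsZigzagSeq.eq_add_of_eq {f g : ℕ → Finset V} (hf : T.IsZigzagSeq f)
    (hg : T.IsZigzagSeq g) {i j : ℕ} (h0 : f i = g j) (h1 : f (i + 1) = g (j + 1)) (k : ℕ) :
    f (i + k) = g (j + k) := by
  suffices ∀ k, f (i + k) = g (j + k) ∧ f (i + k + 1) = g (j + k + 1) from (this k).1
  intro k
  induction k with
  | zero => exact ⟨h0, h1⟩
  | succ k ih =>
    refine ⟨ih.2, ?_⟩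
    have hgk := isZigzagSeq_iff.mp hg (j + k)
    rw [← ih.1, ← ih.2] at hgk
    exact (isZigzagSeq_iff.mp hf (i + k)).right_unique hgk

namespace Zigzag

variable (Z : T.Zigzag)

def IsEdgeSimple : Prop :=
  ∀ i j, i < Z.period → j < Z.period → i ≠ j → Z.seq i ≠ Z.seq j

lemma isZigzagTriple (i : ℕ) : T.IsZigzagTriple (Z.seq i) (Z.seq (i + 1)) (Z.seq (i + 2)) :=
  isZigzagSeq_iff.mp Z.isZigzag i

lemma card_seq (i : ℕ) : #(Z.seq i) = 2 := (Z.isZigzagTriple i).left.card_left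

lemma seq_succ_ne (i : ℕ) : Z.seq (i + 1) ≠ Z.seq i := (Z.isZigzagTriple i).left.ne.symm

lemma shadow_mem (i : ℕ) : Z.seq i ∪ Z.seq (i + 1) ∈ T.faces :=
  (Z.isZigzagTriple i).left.union_mem

lemma shadow_ne (i : ℕ) : Z.seq i ∪ Z.seq (i + 1) ≠ Z.seq (i + 1) ∪ Z.seq (i + 2) :=
  (Z.isZigzagTriple i).union_ne

lemma eq_shadow_of_subset {i : ℕ} (hF : F ∈ T.faces) (h : Z.seq (i + 1) ⊆ F) :
    F = Z.seq i ∪ Z.seq (i + 1) ∨ F = Z.seq (i + 1) ∪ Z.seq (i + 2) :=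
  eq_or_eq_of_edge_subset (Z.card_seq _) (Z.shadow_mem i) subset_union_right
    (Z.shadow_mem (i + 1)) subset_union_left (Z.shadow_ne i) hF h

lemma one_lt_period : 1 < Z.period := by
  have := Z.period_pos
  have h1 : Z.period ≠ 1 := fun h => Z.seq_succ_ne 0 (h ▸ Z.periodic 0)
  omega

lemma period_le {m D : ℕ} (hD : 0 < D) (h0 : Z.seq (m + D) = Z.seq m)
    (h1 : Z.seq (m + D + 1) = Z.seq (m + 1)) : Z.period ≤ D := by
  have hshift := Z.isZigzag.eq_add_of_eq Z.isZigzag h0 h1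
  have hmul : Function.Periodic Z.seq (m * Z.period) := Function.Periodic.nat_mul Z.periodic m
  refine Z.period_min D hD fun i => ?_
  have hm : m ≤ i + m * Z.period := le_add_left (Nat.le_mul_of_pos_right m Z.period_pos)
  calc Z.seq (i + D) = Z.seq (m + D + (i + m * Z.period - m)) := by
        rw [← hmul (i + D)]; congr 1; omega
    _ = Z.seq (m + (i + m * Z.period - m)) := hshift _
    _ = Z.seq i := by rw [Nat.add_sub_cancel' hm, hmul]

lemma exists_passes_of_subset {k : ℕ} (h : Z.seq k ⊆ F) :
    ∃ a ∈ F, ∃ b ∈ F, Z.Passes k a b := by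
  obtain ⟨b, hb⟩ := (Z.isZigzagTriple k).left.inter_nonempty
  obtain ⟨a, hab, hk⟩ := exists_eq_pair_of_mem (Z.card_seq k) (mem_inter.mp hb).1
  exact ⟨a, h (by rw [hk]; simp), b, h (mem_inter.mp hb).1, hk, hab, (mem_inter.mp hb).2⟩

lemma passes_succ_of_mem {i : ℕ} {a b : V} (ha : a ∈ Z.seq i) (h : Z.seq (i + 1) = {a, b})
    (hab : a ≠ b) : Z.Passes (i + 1) a b := by
  obtain ⟨c, hc⟩ := (Z.isZigzagTriple (i + 1)).left.inter_nonempty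
  have hca : c ≠ a := fun hca =>
    disjoint_left.mp (Z.isZigzagTriple i).disjoint ha (hca ▸ (mem_inter.mp hc).2)
  have hcb : c = b := by
    have := (mem_inter.mp hc).1
    rw [h] at this
    simp only [mem_insert, mem_singleton] at this
    tauto
  exact ⟨h, hab, hcb ▸ (mem_inter.mp hc).2⟩

lemma seq_succ_eq_erase {m : ℕ} {p q : V} (h : Z.Passes m p q) :
    Z.seq (m + 1) = (Z.seq m ∪ Z.seq (m + 1)).erase p := by
  have hp : p ∉ Z.seq (m + 1) := fun hp => Z.seq_succ_ne m
    (eq_of_subset_of_card_le (h.1 ▸ insert_subset hp (singleton_subset_iff.mpr h.2.2))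
      (by rw [Z.card_seq, Z.card_seq])).symm
  refine eq_of_subset_of_card_le
    (fun x hx => mem_erase.mpr ⟨fun hxp => hp (hxp ▸ hx), mem_union_right _ hx⟩) ?_
  rw [card_erase_of_mem (mem_union_left _ (h.1 ▸ mem_insert_self p {q})),
    T.card_eq _ (Z.shadow_mem m), Z.card_seq]

lemma passes_add_period {i : ℕ} {a b : V} : Z.Passes (i + Z.period) a b ↔ Z.Passes i a b := by
  rw [Passes, Passes, Z.periodic, show i + Z.period + 1 = i + 1 + Z.period by omega, Z.periodic]

lemma shadow_eq_of_first_return {m D : ℕ} (hD : 1 < D)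
    (hsub : Z.seq (m + D) ⊆ Z.seq m ∪ Z.seq (m + 1))
    (hnone : ∀ k, 1 < k → k < D → ¬ Z.seq (m + k) ⊆ Z.seq m ∪ Z.seq (m + 1)) :
    Z.seq (m + D) ∪ Z.seq (m + D + 1) = Z.seq m ∪ Z.seq (m + 1) := by
  obtain ⟨D, rfl⟩ : ∃ D', D = D' + 1 := ⟨D - 1, by omega⟩
  rcases Z.eq_shadow_of_subset (i := m + D) (Z.shadow_mem m) hsub with h | h
  · rcases (show D = 1 ∨ 1 < D by omega) with rfl | hD1
    · exact absurd h (Z.shadow_ne m)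
    · exact absurd (h ▸ subset_union_left) (hnone D hD1 (by omega))
  · exact h.symm

end Zigzag

variable (T) in
def Flag : Type := {p : Finset V × Finset V // T.IsFlag p.1 p.2}

instance : Finite T.Flag := Subtype.finite

noncomputable def Flag.next (p : T.Flag) : T.Flag :=
  ⟨(p.1.2, p.2.exists_isZigzagTriple.choose), p.2.exists_isZigzagTriple.choose_spec.right⟩

lemma Flag.isZigzagTriple_next (p : T.Flag) : T.IsZigzagTriple p.1.1 p.1.2 p.next.1.2 :=
  p.2.exists_isZigzagTriple.choose_spec

lemma Flag.next_injective : Function.Injective (Flag.next : T.Flag → T.Flag) := by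
  intro p q h
  have h2 : p.1.2 = q.1.2 := congrArg (·.1.1) h
  have hc : p.next.1.2 = q.next.1.2 := congrArg (·.1.2) h
  have hq := q.isZigzagTriple_next
  rw [← h2, ← hc] at hq
  exact Subtype.ext (Prod.ext (p.isZigzagTriple_next.left_unique hq) h2)

lemma Flag.isZigzagTriple_iterate (p : T.Flag) (k : ℕ) :
    T.IsZigzagTriple (Flag.next^[k] p).1.1 (Flag.next^[k + 1] p).1.1
      (Flag.next^[k + 2] p).1.1 := by
  rw [Function.iterate_succ_apply', Function.iterate_succ_apply', Function.iterate_succ_apply']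
  exact (Flag.next^[k] p).isZigzagTriple_next

lemma exists_zigzag_of_isFlag (h : T.IsFlag a b) :
    ∃ Z : T.Zigzag, Z.seq 0 = a ∧ Z.seq 1 = b := by
  classical
  let p : T.Flag := ⟨(a, b), h⟩
  obtain ⟨n, hn, hp⟩ := Function.mem_periodicPts.mp (Flag.next_injective.mem_periodicPts p)
  have hper : ∃ n, 0 < n ∧ ∀ i, (Flag.next^[i + n] p).1.1 = (Flag.next^[i] p).1.1 :=
    ⟨n, hn, fun i => by rw [Function.iterate_add_apply, hp.eq]⟩
  exact ⟨⟨fun k => (Flag.next^[k] p).1.1, Nat.find hper, (Nat.find_spec hper).1,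
    (Nat.find_spec hper).2, fun m hm hm' => Nat.find_min' hper ⟨hm, hm'⟩,
    isZigzagSeq_iff.mpr p.isZigzagTriple_iterate⟩, rfl, rfl⟩

namespace Zigzag

variable {Z : T.Zigzag}

lemma monodromyRel_of_isEdgeSimple (hZ : Z.IsEdgeSimple) {x y z : V} (hxy : x ≠ y)
    (hyz : y ≠ z) (hxz : x ≠ z) (h0 : Z.seq 0 = {z, x}) (h1 : Z.seq 1 = {x, y}) :
    T.MonodromyRel {x, y, z} x y z x := by
  have hn := Z.one_lt_period
  have hA : Z.seq 0 ∪ Z.seq 1 = {x, y, z} := by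
    rw [h0, h1]; ext; simp only [mem_union, mem_insert, mem_singleton]; tauto
  have hzx : Z.Passes 0 z x := ⟨h0, hxz.symm, by simp [h1]⟩
  refine ⟨by simp, by simp, Z, 0, Z.period, ⟨z, by simp, hxz.symm, hyz.symm, hzx⟩,
    Z.passes_succ_of_mem (by simp [h0]) h1 hxy, hn,
    by simpa using Z.passes_add_period.mpr hzx, by simp, by simp, ?_⟩
  intro k hk hkn a b ha hb hab
  have hface : {x, y, z} ∈ T.faces := hA ▸ Z.shadow_mem 0
  have hsub : Z.seq k ⊆ {x, y, z} := by
    rw [hab.1]; exact insert_subset ha (singleton_subset_iff.mpr hb)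
  have hthird : ∀ j, 1 < j → j < Z.period → Z.seq j ⊆ {x, y, z} → Z.seq j = {y, z} := by
    intro j hj hjn hjF
    rcases eq_pair_of_subset_triple hjF (Z.card_seq j) with h | h | h
    · exact absurd (h.trans h1.symm) (hZ j 1 hjn hn (by omega))
    · exact h
    · exact absurd (h.trans (h0.trans (pair_comm z x)).symm) (hZ j 0 hjn (by omega) (by omega))
  obtain ⟨k, rfl⟩ : ∃ k', k = k' + 1 := ⟨k - 1, by omega⟩
  rcases Z.eq_shadow_of_subset hface hsub with h | h
  · rcases (show k = 1 ∨ 1 < k by omega) with rfl | hk1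
    · exact Z.shadow_ne 0 (hA.trans h)
    · exact Z.seq_succ_ne k ((hthird _ hk hkn hsub).trans
        (hthird k hk1 (by omega) (h ▸ subset_union_left)).symm)
  · rcases (show k + 2 = Z.period ∨ k + 2 < Z.period by omega) with hkn' | hkn'
    · apply Z.shadow_ne (k + 1)
      rw [← h, show k + 1 + 1 = 0 + Z.period by omega, show k + 1 + 2 = 1 + Z.period by omega,
        Z.periodic, Z.periodic, hA]
    · exact Z.seq_succ_ne (k + 1) ((hthird _ (by omega) hkn' (h ▸ subset_union_right)).trans
        (hthird _ hk hkn hsub).symm)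

lemma seq_add_ne_of_mfIsDInv {m d : ℕ} (hM : T.MFIsDInv (Z.seq m ∪ Z.seq (m + 1))) (hd : 0 < d)
    (hdn : d < Z.period) : Z.seq (m + d) ≠ Z.seq m := by
  intro hmd
  obtain ⟨p, -, q, -, hpq⟩ := Z.exists_passes_of_subset (F := Z.seq m) subset_rfl
  obtain ⟨r, hrq, hr⟩ := exists_eq_pair_of_mem (Z.card_seq (m + 1)) hpq.2.2
  have hpr : p ≠ r := by rintro rfl; exact Z.seq_succ_ne m (hr.trans hpq.1.symm)
  have hA : Z.seq m ∪ Z.seq (m + 1) = {q, r, p} := by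
    rw [hpq.1, hr]; ext; simp only [mem_union, mem_insert, mem_singleton]; tauto
  obtain ⟨-, -, Z', i, j, ⟨w, hwA, hwq, hwr, hw⟩, hi1, hij, hj, -, -, hnone⟩ :=
    hM q r p hA.symm hrq.symm hpr.symm hpq.2.1.symm
  have hwp : w = p := by
    rw [hA] at hwA; simp only [mem_insert, mem_singleton] at hwA; tauto
  have hagree : ∀ k, Z'.seq (i + k) = Z.seq (m + k) :=
    Z'.isZigzag.eq_add_of_eq Z.isZigzag (by rw [hw.1, hpq.1, hwp]) (by rw [hi1.1, hr, pair_comm])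
  obtain ⟨D, rfl⟩ : ∃ D, j = i + D := ⟨j - i, by omega⟩
  have hpqD : Z.Passes (m + D) p q := ⟨hagree D ▸ hj.1, hj.2.1, hagree (D + 1) ▸ hj.2.2⟩
  have hD : Z.seq (m + D) = Z.seq m := hpqD.1.trans hpq.1.symm
  have hnone' : ∀ k, 1 < k → k < D → ¬ Z.seq (m + k) ⊆ Z.seq m ∪ Z.seq (m + 1) := by
    intro k hk hkD hsub
    obtain ⟨a, ha, b, hb, hab⟩ := Z'.exists_passes_of_subset (hagree k ▸ hsub)
    exact hnone (i + k) (by omega) (by omega) a b ha hb hab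
  have hDd : D ≤ d := by
    by_contra! hdD
    have hd1 : d ≠ 1 := by rintro rfl; exact Z.seq_succ_ne m hmd
    exact hnone' d (by omega) hdD (hmd ▸ subset_union_left)
  have hshadow := Z.shadow_eq_of_first_return (by omega) (hD ▸ subset_union_left) hnone'
  have hnext : Z.seq (m + D + 1) = Z.seq (m + 1) := by
    rw [Z.seq_succ_eq_erase hpqD, hshadow]
    exact (Z.seq_succ_eq_erase hpq).symm
  exact absurd (Z.period_le (by omega) hD hnext) (by omega)

lemma isEdgeSimple_of_mfIsDInv (hM : ∀ F ∈ T.faces, T.MFIsDInv F) : Z.IsEdgeSimple := by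
  intro i j hi hj hij heq
  rcases Nat.lt_or_gt_of_ne hij with h | h
  · obtain ⟨d, rfl⟩ := Nat.exists_eq_add_of_le h.le
    exact seq_add_ne_of_mfIsDInv (hM _ (Z.shadow_mem i)) (by omega) (by omega) heq.symm
  · obtain ⟨d, rfl⟩ := Nat.exists_eq_add_of_le h.le
    exact seq_add_ne_of_mfIsDInv (hM _ (Z.shadow_mem j)) (by omega) (by omega) heq

end Zigzag

lemma mfIsDInv_of_isEdgeSimple (h : ∀ Z : T.Zigzag, Z.IsEdgeSimple) (hF : F ∈ T.faces) :
    T.MFIsDInv F := by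
  rintro x y z rfl hxy hyz hxz
  have hflag : T.IsFlag {z, x} {x, y} := by
    refine isFlag_of_subset hF (by simp [insert_subset_iff]) (by simp [insert_subset_iff])
      (card_pair hxz.symm) (card_pair hxy) fun h => ?_
    have hy : y ∈ ({z, x} : Finset V) := h ▸ by simp
    simp only [mem_insert, mem_singleton] at hy
    tauto
  obtain ⟨Z, h0, h1⟩ := exists_zigzag_of_isFlag hflag
  exact Zigzag.monodromyRel_of_isEdgeSimple (h Z) hxy hyz hxz h0 h1

end Triangulation

/-- every zigzag is edge-simple iff `M_F = D_F⁻¹` for every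
face `F`. -/
theorem edge_simple_iff_MF_eq_DF_inv {V : Type} [Fintype V] [DecidableEq V]
    (T : Triangulation V) :
    (∀ Z : T.Zigzag, ∀ i j : ℕ, i < Z.period → j < Z.period → i ≠ j →
      Z.seq i ≠ Z.seq j) ↔ (∀ F ∈ T.faces, T.MFIsDInv F) :=
  ⟨fun h _ hF => Triangulation.mfIsDInv_of_isEdgeSimple h hF,
    fun hM _ => Triangulation.Zigzag.isEdgeSimple_of_mfIsDInv hM⟩
end

section
/- A triangulation of a connected closed surface is z-knotted (contains exactly one zigzag up to reversal) if and only if it is locally z-knotted in every face, i.e., for every face F the set Z(F) consists of exactly two mutually reversed zigzags. -/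
open Finset

/-!
Starting from an ordered face `(a, b, c)`, step to `(b, c, d)`, where `{b, c, d}` is the other
face on the edge `{b, c}`. The edges `{a, b}` of the resulting orbit form a zigzag; the step is
injective on a finite set, so the orbit is periodic. Thus every edge lies on a zigzag, and every
face meets one, which gives the forward direction. Conversely, the zigzag through the common edge
of two adjacent faces meets both, so along a path in the dual graph local z-knottedness carries
any zigzag to any other, up to shift and reversal.
-/

theorem Function.Periodic.eq_of_forall_natCast_eq {α : Type*} {f g : ℤ → α} {p q : ℤ}
    (hf : Function.Periodic f p) (hg : Function.Periodic g q) (hp : 0 < p) (hq : 0 < q)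
    (h : ∀ n : ℕ, f n = g n) : f = g := by
  funext n
  have hpq : 1 ≤ p * q := mul_pos hp hq
  have hm : 0 ≤ n + |n| * q * p := by nlinarith [neg_abs_le n, abs_nonneg n]
  calc f n = f (n + |n| * q * p) := (hf.int_mul _ n).symm
    _ = g (n + |n| * q * p) := by rw [← Int.toNat_of_nonneg hm, h]
    _ = g (n + |n| * p * q) := by rw [mul_right_comm]
    _ = g n := hg.int_mul _ n

namespace Triangulation

variable {V : Type} [Fintype V] [DecidableEq V] {T : Triangulation V}

variable (T) in
@[ext]
structure OrderedFace where
  a : V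
  b : V
  c : V
  mem_faces : {a, b, c} ∈ T.faces

lemma ne_of_mem_faces {a b c : V} (h : {a, b, c} ∈ T.faces) : a ≠ b ∧ a ≠ c ∧ b ≠ c := by
  have h3 := T.card_eq _ h
  refine ⟨?_, ?_, ?_⟩ <;> rintro rfl <;> simp at h3 <;>
    exact absurd h3 (Finset.card_le_two.trans_lt (by norm_num)).ne

lemma eq_of_mem_faces {F : Finset V} (hF : F ∈ T.faces) {a b c : V} (ha : a ∈ F) (hb : b ∈ F)
    (hc : c ∈ F) (hab : a ≠ b) (hac : a ≠ c) (hbc : b ≠ c) : F = {a, b, c} := by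
  refine (Finset.eq_of_subset_of_card_le ?_ ?_).symm
  · simp [Finset.insert_subset_iff, ha, hb, hc]
  · rw [T.card_eq F hF, Finset.card_eq_three.mpr ⟨a, b, c, hab, hac, hbc, rfl⟩]

lemma exists_face_across {a b c : V} (h : {a, b, c} ∈ T.faces) :
    ∃ d, d ≠ a ∧ {b, c, d} ∈ T.faces := by
  obtain ⟨-, -, hbc⟩ := ne_of_mem_faces h
  have htwo := T.edge_two_faces {b, c} (Finset.card_pair hbc) ⟨_, h, Finset.subset_insert _ _⟩
  obtain ⟨G, hG, hGne⟩ := Finset.exists_mem_ne (htwo ▸ one_lt_two) ({a, b, c} : Finset V)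
  obtain ⟨hG, hbcG⟩ := Finset.mem_filter.mp hG
  obtain ⟨d, hd⟩ : (G \ {b, c}).Nonempty := by
    rw [← Finset.card_pos, Finset.card_sdiff_of_subset hbcG, T.card_eq G hG, Finset.card_pair hbc]
    norm_num
  simp only [Finset.mem_sdiff, Finset.mem_insert, Finset.mem_singleton, not_or] at hd
  have hGeq := T.eq_of_mem_faces hG (hbcG (by simp)) (hbcG (by simp)) hd.1 hbc
    (Ne.symm hd.2.1) (Ne.symm hd.2.2)
  refine ⟨d, ?_, hGeq ▸ hG⟩
  rintro rfl
  exact hGne (hGeq.trans (by ext; simp; tauto))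

lemma eq_of_three_faces_on_edge {x y z b c : V} (hx : {x, b, c} ∈ T.faces)
    (hy : {y, b, c} ∈ T.faces) (hz : {z, b, c} ∈ T.faces) (hxz : x ≠ z) (hyz : y ≠ z) : x = y := by
  by_contra hxy
  have face_ne : ∀ {u v : V}, {u, b, c} ∈ T.faces → u ≠ v →
      ({u, b, c} : Finset V) ≠ {v, b, c} := fun {u v} hu huv he => by
    obtain ⟨hub, huc, -⟩ := ne_of_mem_faces hu
    have hu' : u ∈ ({v, b, c} : Finset V) := he ▸ Finset.mem_insert_self _ _
    simp [huv, hub, huc] at hu'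
  have mem : ∀ {u : V}, {u, b, c} ∈ T.faces →
      {u, b, c} ∈ T.faces.filter fun F => {b, c} ⊆ F :=
    fun hu => Finset.mem_filter.mpr ⟨hu, Finset.subset_insert _ _⟩
  have hcard := T.edge_two_faces {b, c} (Finset.card_pair (ne_of_mem_faces hx).2.2)
    ⟨_, hx, Finset.subset_insert _ _⟩
  have := Finset.two_lt_card.mpr ⟨_, mem hx, _, mem hy, _, mem hz,
    face_ne hx hxy, face_ne hx hxz, face_ne hy hyz⟩
  omega

open Classical in
noncomputable def Zigzag.ofPeriodic (f : ℕ → Finset V) (hf : T.IsZigzagSeq f)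
    (hper : ∃ m, 0 < m ∧ Function.Periodic f m) : T.Zigzag where
  seq := f
  period := Nat.find hper
  period_pos := (Nat.find_spec hper).1
  periodic := (Nat.find_spec hper).2
  period_min _ hm h := Nat.find_min' hper ⟨hm, h⟩
  isZigzag := hf

namespace OrderedFace

noncomputable def next (f : T.OrderedFace) : T.OrderedFace :=
  ⟨f.b, f.c, (exists_face_across f.mem_faces).choose,
    (exists_face_across f.mem_faces).choose_spec.2⟩

lemma next_c_ne_a (f : T.OrderedFace) : f.next.c ≠ f.a :=
  (exists_face_across f.mem_faces).choose_spec.1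

lemma next_injective : Function.Injective (next (T := T)) := by
  intro f g h
  have hb : f.b = g.b := congrArg a h
  have hc : f.c = g.c := congrArg b h
  have hd : f.next.c = g.next.c := congrArg c h
  have face_of_next : ∀ f : T.OrderedFace, {f.next.c, f.b, f.c} ∈ T.faces := fun f => by
    convert f.next.mem_faces using 1
    ext; simp [next]; tauto
  have ha : f.a = g.a := eq_of_three_faces_on_edge f.mem_faces (hb ▸ hc ▸ g.mem_faces)
    (face_of_next f) f.next_c_ne_a.symm (hd ▸ g.next_c_ne_a.symm)
  ext <;> assumption

instance : Finite T.OrderedFace :=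
  Finite.of_injective (fun f => (f.a, f.b, f.c)) fun f g h => by
    simp only [Prod.mk.injEq] at h
    ext <;> simp [h]

lemma exists_periodic_iterate_next (f : T.OrderedFace) :
    ∃ m, 0 < m ∧ Function.Periodic (fun n => next^[n] f) m := by
  obtain ⟨m, hm, hf⟩ := next_injective.mem_periodicPts f
  exact ⟨m, hm, fun n => by simp only [Function.iterate_add_apply, hf.eq]⟩

def edge (f : T.OrderedFace) : Finset V := {f.a, f.b}

lemma isEdge_edge (f : T.OrderedFace) : T.IsEdge f.edge :=
  ⟨Finset.card_pair (ne_of_mem_faces f.mem_faces).1, _, f.mem_faces, by simp [edge]⟩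

lemma edge_adjacent_next (f : T.OrderedFace) : f.edge ≠ f.next.edge ∧
    (f.edge ∩ f.next.edge).Nonempty ∧ ∃ F ∈ T.faces, f.edge ⊆ F ∧ f.next.edge ⊆ F := by
  obtain ⟨-, hac, -⟩ := ne_of_mem_faces f.mem_faces
  refine ⟨fun h => hac ?_, ⟨f.b, by simp [edge, next]⟩, _, f.mem_faces, ?_, ?_⟩
  · have : f.a ∈ f.next.edge := h ▸ Finset.mem_insert_self _ _
    simpa [edge, next, (ne_of_mem_faces f.mem_faces).1] using this
  all_goals simp [edge, next, Finset.insert_subset_iff]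

lemma ne_of_edge_subset {f : T.OrderedFace} {F F' : Finset V} (hF : F ∈ T.faces)
    (h₀ : f.edge ⊆ F) (h₁ : f.next.edge ⊆ F) (h₂ : f.next.next.edge ⊆ F') : F ≠ F' := by
  rintro rfl
  obtain ⟨hab, hac, hbc⟩ := ne_of_mem_faces f.mem_faces
  obtain ⟨-, hbd, hcd⟩ := ne_of_mem_faces f.next.mem_faces
  simp only [edge, next, Finset.insert_subset_iff, Finset.singleton_subset_iff] at h₀ h₁ h₂
  have hd := h₂.2
  rw [eq_of_mem_faces hF h₀.1 h₀.2 h₁.2 hab hac hbc] at hd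
  simp only [next, Finset.mem_insert, Finset.mem_singleton] at hd hbd hcd
  rcases hd with hd | hd | hd
  exacts [f.next_c_ne_a hd, hbd hd.symm, hcd hd.symm]

lemma edge_inter_next_next_edge (f : T.OrderedFace) : f.edge ∩ f.next.next.edge = ∅ := by
  obtain ⟨hab, hac, hbc⟩ := ne_of_mem_faces f.mem_faces
  obtain ⟨-, hbd, -⟩ := ne_of_mem_faces f.next.mem_faces
  have had := f.next_c_ne_a
  simp only [next] at hbd had
  ext x
  simp only [edge, next, Finset.mem_inter, Finset.mem_insert, Finset.mem_singleton,
    Finset.notMem_empty, iff_false]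
  grind

lemma isZigzagSeq_edge_iterate (f : T.OrderedFace) :
    T.IsZigzagSeq fun n => (next^[n] f).edge := by
  have shift : ∀ n, next^[n + 1] f = (next^[n] f).next := fun n =>
    Function.iterate_succ_apply' _ n f
  refine ⟨fun n => isEdge_edge _, fun n => ?_, fun n F hF F' _ h₀ h₁ _ h₂ => ?_, fun n => ?_⟩
  · simpa only [shift] using edge_adjacent_next _
  · simp only [shift] at h₁ h₂
    exact ne_of_edge_subset hF h₀ h₁ h₂
  · simpa only [shift] using edge_inter_next_next_edge _

noncomputable def zigzag (f : T.OrderedFace) : T.Zigzag :=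
  Zigzag.ofPeriodic _ f.isZigzagSeq_edge_iterate <| by
    obtain ⟨m, hm, hper⟩ := f.exists_periodic_iterate_next
    exact ⟨m, hm, fun n => congrArg edge (hper n)⟩

lemma zigzag_seq_zero (f : T.OrderedFace) : f.zigzag.seq 0 = {f.a, f.b} := rfl

end OrderedFace

lemma exists_zigzag_seq_zero_eq {F e : Finset V} (hF : F ∈ T.faces) (he : e.card = 2)
    (heF : e ⊆ F) : ∃ Z : T.Zigzag, Z.seq 0 = e := by
  obtain ⟨x, y, hxy, rfl⟩ := Finset.card_eq_two.mp he
  obtain ⟨z, hz⟩ : (F \ {x, y}).Nonempty := by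
    rw [← Finset.card_pos, Finset.card_sdiff_of_subset heF, T.card_eq F hF, he]
    norm_num
  simp only [Finset.mem_sdiff, Finset.mem_insert, Finset.mem_singleton, not_or] at hz
  have hxyz := T.eq_of_mem_faces hF (heF (by simp)) (heF (by simp)) hz.1 hxy
    (Ne.symm hz.2.1) (Ne.symm hz.2.2)
  exact ⟨(⟨x, y, z, hxyz ▸ hF⟩ : T.OrderedFace).zigzag, rfl⟩

lemma exists_zigzag_meets {F : Finset V} (hF : F ∈ T.faces) : ∃ Z : T.Zigzag, Z.Meets F := by
  obtain ⟨x, y, z, -, -, -, rfl⟩ := Finset.card_eq_three.mp (T.card_eq F hF)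
  exact ⟨(⟨x, y, z, hF⟩ : T.OrderedFace).zigzag, 0, by
    simp [OrderedFace.zigzag_seq_zero, Finset.insert_subset_iff]⟩

namespace Zigzag

def intSeq (Z : T.Zigzag) (n : ℤ) : Finset V := Z.seq (n % Z.period).toNat

lemma intSeq_congr (Z : T.Zigzag) {a b : ℤ} (h : a ≡ b [ZMOD Z.period]) :
    Z.intSeq a = Z.intSeq b := by
  rw [intSeq, intSeq, h]

lemma intSeq_natCast (Z : T.Zigzag) (n : ℕ) : Z.intSeq n = Z.seq n := by
  rw [intSeq, ← Int.natCast_mod, Int.toNat_natCast]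
  exact Function.Periodic.map_mod_nat Z.periodic n

lemma intSeq_periodic (Z : T.Zigzag) : Function.Periodic Z.intSeq Z.period :=
  fun _ => Z.intSeq_congr Int.add_modEq_right

/-- On `ℤ`-indexed sequences, "equal up to shift and reversal" becomes precomposition with
`n ↦ ±n + k`, which is visibly transitive. -/
def SameUpToReversal (Z Z' : T.Zigzag) : Prop :=
  ∃ (ε : ℤˣ) (k : ℤ), ∀ n, Z'.intSeq n = Z.intSeq (ε * n + k)

lemma SameUpToReversal.refl (Z : T.Zigzag) : Z.SameUpToReversal Z :=
  ⟨1, 0, fun n => by simp⟩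

lemma SameUpToReversal.trans {Z Z' Z'' : T.Zigzag} (h : Z.SameUpToReversal Z')
    (h' : Z'.SameUpToReversal Z'') : Z.SameUpToReversal Z'' := by
  obtain ⟨ε, k, h⟩ := h
  obtain ⟨ε', k', h'⟩ := h'
  exact ⟨ε * ε', ε * k' + k, fun n => by rw [h', h]; push_cast; congr 1; ring⟩

lemma sameUpToReversal_of_equiv {Z Z' : T.Zigzag} (h : Z.Equiv Z') :
    Z.SameUpToReversal Z' := by
  obtain ⟨k, hk⟩ := h
  have := Z'.intSeq_periodic.eq_of_forall_natCast_eq (Z.intSeq_periodic.add_const (k : ℤ))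
    (by exact_mod_cast Z'.period_pos) (by exact_mod_cast Z.period_pos)
    fun n => by rw [intSeq_natCast, hk, ← intSeq_natCast]; push_cast; rfl
  exact ⟨1, k, fun n => by simpa using congrFun this n⟩

lemma sameUpToReversal_of_isReverseOf {Z Z' : T.Zigzag} (h : Z'.IsReverseOf Z) :
    Z.SameUpToReversal Z' := by
  obtain ⟨k, hk⟩ := h
  have := Z'.intSeq_periodic.eq_of_forall_natCast_eq (Z.intSeq_periodic.const_sub (k : ℤ))
    (by exact_mod_cast Z'.period_pos) (by exact_mod_cast Z.period_pos) fun n => by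
      rw [intSeq_natCast, hk, ← intSeq_natCast]
      apply intSeq_congr
      rw [Nat.cast_sub (by have := Nat.mod_lt n Z.period_pos; omega), Int.modEq_iff_dvd]
      push_cast
      exact ⟨-(n / Z.period) - 1, by rw [Int.emod_def]; ring⟩
  exact ⟨-1, k, fun n => by simpa [neg_add_eq_sub] using congrFun this n⟩

lemma SameUpToReversal.equiv_or_isReverseOf {Z Z' : T.Zigzag} (h : Z.SameUpToReversal Z') :
    Z.Equiv Z' ∨ Z'.IsReverseOf Z := by
  obtain ⟨ε, k, h⟩ := h
  have hk : 0 ≤ k % Z.period := Int.emod_nonneg _ (by exact_mod_cast Z.period_pos.ne')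
  rcases Int.units_eq_one_or ε with rfl | rfl
  · refine Or.inl ⟨(k % Z.period).toNat, fun i => ?_⟩
    rw [← intSeq_natCast, ← intSeq_natCast, h]
    apply intSeq_congr
    rw [Int.modEq_iff_dvd]
    push_cast
    exact ⟨-(k / Z.period), by rw [Int.toNat_of_nonneg hk, Int.emod_def]; ring⟩
  · refine Or.inr ⟨(k % Z.period).toNat, fun i => ?_⟩
    rw [← intSeq_natCast, ← intSeq_natCast, h]
    apply intSeq_congr
    rw [Nat.cast_sub (by have := Nat.mod_lt i Z.period_pos; omega), Int.modEq_iff_dvd]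
    push_cast
    exact ⟨1 + i / Z.period - k / Z.period, by
      rw [Int.toNat_of_nonneg hk, Int.emod_def, Int.emod_def]; ring⟩

lemma sameUpToReversal_iff {Z Z' : T.Zigzag} :
    Z.SameUpToReversal Z' ↔ Z.Equiv Z' ∨ Z'.IsReverseOf Z :=
  ⟨SameUpToReversal.equiv_or_isReverseOf,
    fun h => h.elim sameUpToReversal_of_equiv sameUpToReversal_of_isReverseOf⟩

end Zigzag

lemma exists_sameUpToReversal_meets_of_reflTransGen
    (hloc : ∀ F ∈ T.faces, T.LocallyZKnotted F) {Z : T.Zigzag} {A C : Finset V}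
    (hZA : Z.Meets A)
    (hAC : Relation.ReflTransGen (fun A B => A ∈ T.faces ∧ B ∈ T.faces ∧ (A ∩ B).card = 2) A C) :
    ∃ W : T.Zigzag, W.Meets C ∧ Z.SameUpToReversal W := by
  induction hAC with
  | refl => exact ⟨Z, hZA, .refl Z⟩
  | tail _ hBC ih =>
    obtain ⟨W, hWB, hZW⟩ := ih
    obtain ⟨hB, -, hcard⟩ := hBC
    obtain ⟨U, hU⟩ := exists_zigzag_seq_zero_eq hB hcard Finset.inter_subset_left
    have hUB : U.Meets _ := ⟨0, hU ▸ Finset.inter_subset_left⟩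
    exact ⟨U, ⟨0, hU ▸ Finset.inter_subset_right⟩,
      hZW.trans (Zigzag.sameUpToReversal_iff.mpr ((hloc _ hB).2 W U hWB hUB))⟩

end Triangulation

/-- a triangulation is z-knotted iff it is locally z-knotted
in every face. -/
theorem zknotted_iff_locally_zknotted {V : Type} [Fintype V] [DecidableEq V]
    (T : Triangulation V) :
    T.ZKnotted ↔ ∀ F ∈ T.faces, T.LocallyZKnotted F := by
  constructor
  · rintro ⟨-, huniq⟩ F hF
    exact ⟨T.exists_zigzag_meets hF, fun Z Z' _ _ => huniq Z Z'⟩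
  · intro hloc
    obtain ⟨F₀, hF₀⟩ := T.faces_nonempty
    refine ⟨⟨(T.exists_zigzag_meets hF₀).choose⟩, fun Z Z' => ?_⟩
    obtain ⟨-, A, hA, hZA⟩ := Z.isZigzag.1 0
    obtain ⟨-, B, hB, hZ'B⟩ := Z'.isZigzag.1 0
    obtain ⟨W, hWB, hZW⟩ := T.exists_sameUpToReversal_meets_of_reflTransGen hloc ⟨0, hZA⟩
      (T.connected A hA B hB)
    rw [← Triangulation.Zigzag.sameUpToReversal_iff]
    exact hZW.trans (Triangulation.Zigzag.sameUpToReversal_iff.mpr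
      ((hloc B hB).2 W Z' hWB ⟨0, hZ'B⟩))
end
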